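/- The graded ℤ-module T_• equipped with the symmetrized product ∗̂ is a graded associative unital algebra, with unit the empty set composition ∅ ∈ Comp_0; in particular (P ∗̂ Q) ∗̂ R = P ∗̂ (Q ∗̂ R) for all set compositions P, Q, R. -/

import Mathlib

set_option linter.unreachableTactic false
set_option linter.unusedTactic false
set_option maxHeartbeats 1000000


open Finset

/-- Candidate set compositions: lists of finite sets of positive naturals. -/
abbrev SC : Type := List (Finset ℕ)

/-- The underlying (ground) set of a list of blocks. -/
def ground (L : SC) : Finset ℕ := L.foldr (· ∪ ·) ∅

/-- `L` is a set composition of `[n] = {1,…,n}`. -/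
def IsSetComp (n : ℕ) (L : SC) : Prop :=
  (∀ B ∈ L, B.Nonempty) ∧ L.Pairwise Disjoint ∧ ground L = Finset.Icc 1 n

/-- The degree of a set composition (largest element of its ground set). -/
def maxG (L : SC) : ℕ := (ground L).sup id

/-- The 1-based rank of `x` inside the finite set `A` (the position of `x` in the
increasing enumeration of `A`, when `x ∈ A`); this is the order preserving
relabelling `A → [|A|]`. -/
def rankIn (A : Finset ℕ) (x : ℕ) : ℕ := (A.filter (· ≤ x)).card

/-- `P|_A` : intersect the blocks with `A`, delete the empty intersections, and
relabel along the order preserving bijection `A → [|A|]`. -/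
def restrictSC (A : Finset ℕ) (L : SC) : SC :=
  (L.map fun B => (B ∩ A).image (rankIn A)).filter fun B => decide B.Nonempty

/-- Shift all entries of all blocks by `p`. -/
def shiftSC (p : ℕ) (L : SC) : SC := L.map (Finset.image (· + p))

/-- The restricted product `∗̄` on set compositions:
`P ∗̄ Q = (P₁,…,P_k, p+Q₁,…,p+Q_l)` for `P ∈ Comp_p`. -/
def barMul (P Q : SC) : SC := P ++ shiftSC (maxG P) Q

/-- The order-preserving relabelling map `S → T` (`is_{S,T}`), for finite sets
of equal cardinality. -/
def relabelFun (S T : Finset ℕ) (x : ℕ) : ℕ := (T.sort (· ≤ ·)).getD (rankIn S x - 1) 0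

/-- Relabel a set composition of `S` along the order-preserving bijection `S → T`. -/
def relabelSC (S T : Finset ℕ) (L : SC) : SC := L.map (Finset.image (relabelFun S T))

variable (R : Type) [CommRing R]

/-- The free module with basis indexed by lists of blocks; the twisted descent
algebra `T_•` is its submodule spanned by the set compositions. -/
abbrev FM := SC →₀ R

/-- `T_•` as a submodule: the span of the set compositions. -/
noncomputable def Tspan : Submodule R (FM R) :=
  Submodule.span R {f : FM R | ∃ n P, IsSetComp n P ∧ f = Finsupp.single P 1}

/-- The restricted product `∗̄` as a bilinear map. -/
noncomputable def barL : FM R →ₗ[R] FM R →ₗ[R] FM R :=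
  Finsupp.lift _ R SC fun P => Finsupp.lift _ R SC fun Q => Finsupp.single (barMul P Q) 1

/-- The symmetrized product `∗̂` on basis elements:
`P ∗̂ Q = Σ is_{[p],A}(P) ∗ is_{[q],B}(Q)` over all `A ⊔ B = [p+q]`, `|A| = p`. -/
noncomputable def hatB (P Q : SC) : FM R :=
  ∑ A ∈ (Finset.Icc 1 (maxG P + maxG Q)).powerset.filter (fun A => A.card = maxG P),
    Finsupp.single
      (relabelSC (Finset.Icc 1 (maxG P)) A P ++
        relabelSC (Finset.Icc 1 (maxG Q)) ((Finset.Icc 1 (maxG P + maxG Q)) \ A) Q) 1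

/-- The symmetrized product `∗̂` as a bilinear map. -/
noncomputable def hatL : FM R →ₗ[R] FM R →ₗ[R] FM R :=
  Finsupp.lift _ R SC fun P => Finsupp.lift _ R SC fun Q => hatB R P Q

/-- `T_• ⊗ T_•`, realized as the free module on pairs of basis elements. -/
abbrev FM2 := (SC × SC) →₀ R

/-- `T_• ⊗ T_• ⊗ T_•`, realized as the free module on triples of basis elements. -/
abbrev FM3 := (SC × SC × SC) →₀ R

/-- The restricted coproduct `δ̄ (P) = Σ_{p=0}^n P|_{[p]} ⊗ P|_{{p+1,…,n}}`. -/
noncomputable def dBarL : FM R →ₗ[R] FM2 R :=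
  Finsupp.lift _ R SC fun P =>
    ∑ p ∈ Finset.range (maxG P + 1),
      Finsupp.single
        (restrictSC (Finset.Icc 1 p) P, restrictSC (Finset.Icc (p+1) (maxG P)) P) 1

/-- The cosymmetrized coproduct `δ̂ (P) = Σ_{A ⊔ B = [n]} P|_A ⊗ P|_B`. -/
noncomputable def dHatL : FM R →ₗ[R] FM2 R :=
  Finsupp.lift _ R SC fun P =>
    ∑ A ∈ (Finset.Icc 1 (maxG P)).powerset,
      Finsupp.single (restrictSC A P, restrictSC ((Finset.Icc 1 (maxG P)) \ A) P) 1

/-- Apply a coproduct to the first tensor factor:  `d ⊗ id : T⊗T → T⊗T⊗T`. -/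
noncomputable def applyFst (d : FM R →ₗ[R] FM2 R) : FM2 R →ₗ[R] FM3 R :=
  Finsupp.lift _ R (SC × SC) fun PQ =>
    Finsupp.mapDomain (fun RS : SC × SC => (RS.1, RS.2, PQ.2)) (d (Finsupp.single PQ.1 1))

/-- Apply a coproduct to the second tensor factor:  `id ⊗ d : T⊗T → T⊗T⊗T`. -/
noncomputable def applySnd (d : FM R →ₗ[R] FM2 R) : FM2 R →ₗ[R] FM3 R :=
  Finsupp.lift _ R (SC × SC) fun PQ =>
    Finsupp.mapDomain (fun RS : SC × SC => (PQ.1, RS.1, RS.2)) (d (Finsupp.single PQ.2 1))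

/-- `ε ⊗ id : T⊗T → T`, where `ε` is the projection onto `T_0 ≅ R`
(the coefficient of the empty set composition). -/
noncomputable def epsFst : FM2 R →ₗ[R] FM R :=
  Finsupp.lift _ R (SC × SC) fun PQ =>
    if PQ.1 = ([] : SC) then Finsupp.single PQ.2 1 else 0

/-- `id ⊗ ε : T⊗T → T`. -/
noncomputable def epsSnd : FM2 R →ₗ[R] FM R :=
  Finsupp.lift _ R (SC × SC) fun PQ =>
    if PQ.2 = ([] : SC) then Finsupp.single PQ.1 1 else 0

/-- The twist map `x ⊗ y ↦ y ⊗ x` on `T_• ⊗ T_•`. -/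
noncomputable def twistL : FM2 R →ₗ[R] FM2 R :=
  Finsupp.lift _ R (SC × SC) fun PQ => Finsupp.single (PQ.2, PQ.1) 1

/-- The counit: projection onto the degree-0 component `T_0 ≅ R`. -/
noncomputable def counitL : FM R →ₗ[R] R :=
  Finsupp.lift _ R SC fun P => if P = ([] : SC) then 1 else 0

/-!
Both iterated products expand into the same sum over ordered pairs of disjoint sets
`A, B ⊆ [p+q+r]` with `|A| = p`, `|B| = q`, with summand
`is_{[p],A}(P) ∗ is_{[q],B}(Q) ∗ is_{[r],[p+q+r] ∖ (A ∪ B)}(R)`.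
The reason is that order-preserving bijections between finite sets of naturals are unique, so
relabellings compose: relabelling a term `is_{[p],A}(P) ∗ is_{[q],[p+q] ∖ A}(Q)` of `P ∗̂ Q` along
`φ : [p+q] → C` relabels its two pieces along `φ(A)` and `C ∖ φ(A)`, and `A ↦ φ(A)` is a
bijection from the `p`-subsets of `[p+q]` onto those of `C`. Associativity and unitality on
basis elements then extend bilinearly to the span.
-/

section Relabel

variable {S T A C : Finset ℕ} {x : ℕ}

lemma rankIn_pos (hx : x ∈ S) : 0 < rankIn S x :=
  card_pos.2 ⟨x, mem_filter.2 ⟨hx, le_rfl⟩⟩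

lemma rankIn_strictMonoOn (S : Finset ℕ) : StrictMonoOn (rankIn S) S := by
  intro x _ y hy hxy
  refine card_lt_card ((ssubset_iff_of_subset ?_).2 ⟨y, ?_, ?_⟩)
  · exact fun z hz => mem_filter.2 ⟨(mem_filter.1 hz).1, (mem_filter.1 hz).2.trans hxy.le⟩
  · exact mem_filter.2 ⟨hy, le_rfl⟩
  · simpa using fun _ => hxy

lemma rankIn_image {f : ℕ → ℕ} (hf : StrictMonoOn f S) (hx : x ∈ S) :
    rankIn (S.image f) (f x) = rankIn S x := by
  rw [rankIn, filter_image, card_image_of_injOn (hf.injOn.mono (coe_subset.2 (filter_subset _ _)))]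
  exact congrArg card (filter_congr fun y hy => hf.le_iff_le hy hx)

lemma relabelFun_index_lt (hc : S.card = T.card) (hx : x ∈ S) :
    rankIn S x - 1 < (T.sort (· ≤ ·)).length := by
  have h₁ := rankIn_pos hx
  have h₂ : rankIn S x ≤ S.card := card_filter_le _ _
  rw [length_sort]
  omega

lemma relabelFun_eq_getElem (hc : S.card = T.card) (hx : x ∈ S) :
    relabelFun S T x = (T.sort (· ≤ ·))[rankIn S x - 1]'(relabelFun_index_lt hc hx) :=
  List.getD_eq_getElem _ _ _

lemma relabelFun_mem (hc : S.card = T.card) (hx : x ∈ S) : relabelFun S T x ∈ T := by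
  rw [relabelFun_eq_getElem hc hx]
  exact (mem_sort _).1 (List.getElem_mem _)

lemma relabelFun_strictMonoOn (hc : S.card = T.card) : StrictMonoOn (relabelFun S T) S := by
  intro x hx y hy hxy
  rw [relabelFun_eq_getElem hc hx, relabelFun_eq_getElem hc hy,
    (sortedLT_sort T).getElem_lt_getElem_iff]
  have h₁ := rankIn_pos hx
  have h₂ := rankIn_strictMonoOn S hx hy hxy
  omega

lemma image_relabelFun (hc : S.card = T.card) : S.image (relabelFun S T) = T :=
  eq_of_subset_of_card_le (image_subset_iff.2 fun _ hx => relabelFun_mem hc hx)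
    (by rw [card_image_of_injOn (relabelFun_strictMonoOn hc).injOn, hc])

/-- Both maps preserve ranks, and `rankIn T` is injective on `T`. -/
lemma eqOn_relabelFun {f : ℕ → ℕ} (hf : StrictMonoOn f S) (him : S.image f = T) (hx : x ∈ S) :
    f x = relabelFun S T x := by
  have hc : S.card = T.card := him ▸ (card_image_of_injOn hf.injOn).symm
  have h₁ := rankIn_image hf hx
  have h₂ := rankIn_image (relabelFun_strictMonoOn hc) hx
  rw [him] at h₁
  rw [image_relabelFun hc] at h₂
  exact (rankIn_strictMonoOn T).injOn (him ▸ mem_image_of_mem f hx) (relabelFun_mem hc hx)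
    (h₁.trans h₂.symm)

lemma relabelFun_self (hx : x ∈ S) : relabelFun S S x = x :=
  (eqOn_relabelFun (strictMono_id.strictMonoOn _) image_id hx).symm

lemma relabelFun_relabelFun (hSA : S.card = A.card) (hTC : T.card = C.card) (hA : A ⊆ T)
    (hx : x ∈ S) :
    relabelFun T C (relabelFun S A x) = relabelFun S (A.image (relabelFun T C)) x :=
  eqOn_relabelFun (f := relabelFun T C ∘ relabelFun S A)
    ((relabelFun_strictMonoOn hTC).comp (relabelFun_strictMonoOn hSA)
      fun _ hy => hA (relabelFun_mem hSA hy))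
    (by rw [← image_image, image_relabelFun hSA]) hx

lemma leftInvOn_relabelFun (hc : S.card = T.card) :
    Set.LeftInvOn (relabelFun T S) (relabelFun S T) S := fun x hx => by
  rw [relabelFun_relabelFun hc hc.symm subset_rfl hx, image_relabelFun hc.symm,
    relabelFun_self hx]

lemma image_relabelFun_mem_powersetCard (hc : S.card = T.card) {k : ℕ}
    (hA : A ∈ S.powersetCard k) : A.image (relabelFun S T) ∈ T.powersetCard k := by
  rw [mem_powersetCard] at hA ⊢
  refine ⟨image_subset_iff.2 fun x hx => relabelFun_mem hc (hA.1 hx), ?_⟩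
  rw [card_image_of_injOn ((relabelFun_strictMonoOn hc).injOn.mono (coe_subset.2 hA.1)), hA.2]

lemma image_relabelFun_image_relabelFun (hc : S.card = T.card) (hA : A ⊆ S) :
    (A.image (relabelFun S T)).image (relabelFun T S) = A := by
  rw [image_image, image_congr (f := relabelFun T S ∘ relabelFun S T) (g := id)
    fun x hx => leftInvOn_relabelFun hc (hA hx), image_id]

lemma sum_powersetCard_image_relabelFun {M : Type*} [AddCommMonoid M] (hc : S.card = T.card)
    (k : ℕ) (g : Finset ℕ → M) :
    ∑ A ∈ S.powersetCard k, g (A.image (relabelFun S T)) = ∑ B ∈ T.powersetCard k, g B :=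
  sum_nbij' (image (relabelFun S T)) (image (relabelFun T S))
    (fun _ => image_relabelFun_mem_powersetCard hc)
    (fun _ => image_relabelFun_mem_powersetCard hc.symm)
    (fun _ hA => image_relabelFun_image_relabelFun hc (mem_powersetCard.1 hA).1)
    (fun _ hB => image_relabelFun_image_relabelFun hc.symm (mem_powersetCard.1 hB).1)
    (fun _ _ => rfl)

end Relabel

lemma sum_powersetCard_powersetCard {M : Type*} [AddCommMonoid M] (U : Finset ℕ) (p q : ℕ)
    (f : Finset ℕ → Finset ℕ → M) :
    ∑ C ∈ U.powersetCard (p + q), ∑ A ∈ C.powersetCard p, f A (C \ A) =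
      ∑ A ∈ U.powersetCard p, ∑ B ∈ (U \ A).powersetCard q, f A B := by
  rw [sum_sigma', sum_sigma']
  refine sum_nbij' (fun x => ⟨x.2, x.1 \ x.2⟩) (fun y => ⟨y.1 ∪ y.2, y.1⟩) ?_ ?_ ?_ ?_
    (fun _ _ => rfl)
  · rintro ⟨C, A⟩ h
    simp only [mem_sigma, mem_powersetCard] at h ⊢
    obtain ⟨⟨hCU, hC⟩, hAC, hA⟩ := h
    exact ⟨⟨hAC.trans hCU, hA⟩, sdiff_subset_sdiff hCU le_rfl,
      by rw [card_sdiff_of_subset hAC, hC, hA]; omega⟩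
  · rintro ⟨A, B⟩ h
    simp only [mem_sigma, mem_powersetCard] at h ⊢
    obtain ⟨⟨hAU, hA⟩, hBU, hB⟩ := h
    have hAB : Disjoint A B := (subset_sdiff.1 hBU).2.symm
    exact ⟨⟨union_subset hAU (hBU.trans sdiff_subset), by rw [card_union_of_disjoint hAB, hA, hB]⟩,
      subset_union_left, hA⟩
  · rintro ⟨C, A⟩ h
    simp only [mem_sigma, mem_powersetCard] at h
    simp [union_sdiff_of_subset h.2.1]
  · rintro ⟨A, B⟩ h
    simp only [mem_sigma, mem_powersetCard] at h
    simp [union_sdiff_cancel_left (subset_sdiff.1 h.2.1).2.symm]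

section Ground

lemma ground_cons (B : Finset ℕ) (L : SC) : ground (B :: L) = B ∪ ground L := rfl

lemma mem_ground {L : SC} {x : ℕ} : x ∈ ground L ↔ ∃ B ∈ L, x ∈ B := by
  induction L with
  | nil => simp [ground]
  | cons B L ih => simp [ground_cons, ih]

lemma ground_append (L₁ L₂ : SC) : ground (L₁ ++ L₂) = ground L₁ ∪ ground L₂ := by
  ext
  simp [mem_ground, or_and_right, exists_or]

lemma ground_relabelSC (S T : Finset ℕ) (L : SC) :
    ground (relabelSC S T L) = (ground L).image (relabelFun S T) := by
  ext
  simp only [relabelSC, mem_ground, List.mem_map, exists_exists_and_eq_and, mem_image]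
  exact ⟨fun ⟨B, hB, y, hy, h⟩ => ⟨y, ⟨B, hB, hy⟩, h⟩, fun ⟨y, ⟨B, hB, hy⟩, h⟩ => ⟨B, hB, y, hy, h⟩⟩

lemma maxG_eq {L : SC} {n : ℕ} (h : ground L = Icc 1 n) : maxG L = n := by
  rw [maxG, h]
  rcases n.eq_zero_or_pos with rfl | hn
  · simp
  · exact le_antisymm (Finset.sup_le fun x hx => (mem_Icc.1 hx).2)
      (Finset.le_sup (f := id) (mem_Icc.2 ⟨hn, le_rfl⟩))

end Ground

section RelabelSC

variable {S T A C : Finset ℕ} {L : SC}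

lemma relabelSC_self (hL : ground L ⊆ S) : relabelSC S S L = L := by
  refine (List.map_congr_left fun B hB => ?_).trans (List.map_id L)
  exact (image_congr (g := id) fun x hx => relabelFun_self (hL (mem_ground.2 ⟨B, hB, hx⟩))).trans
    image_id

lemma relabelSC_relabelSC (hSA : S.card = A.card) (hTC : T.card = C.card) (hA : A ⊆ T)
    (hL : ground L ⊆ S) :
    relabelSC T C (relabelSC S A L) = relabelSC S (A.image (relabelFun T C)) L := by
  simp only [relabelSC, List.map_map]
  refine List.map_congr_left fun B hB => ?_
  rw [Function.comp_apply, image_image]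
  exact image_congr fun x hx => relabelFun_relabelFun hSA hTC hA (hL (mem_ground.2 ⟨B, hB, hx⟩))

lemma relabelSC_append (S T : Finset ℕ) (L₁ L₂ : SC) :
    relabelSC S T (L₁ ++ L₂) = relabelSC S T L₁ ++ relabelSC S T L₂ :=
  List.map_append

end RelabelSC

-- `IsSetComp n` is `IsSetCompOf (Icc 1 n)` by definition.
def IsSetCompOf (S : Finset ℕ) (L : SC) : Prop :=
  (∀ B ∈ L, B.Nonempty) ∧ L.Pairwise Disjoint ∧ ground L = S

namespace IsSetCompOf

variable {S T : Finset ℕ} {L L₁ L₂ : SC}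

lemma relabelSC (h : IsSetCompOf S L) (hc : S.card = T.card) :
    IsSetCompOf T (relabelSC S T L) := by
  obtain ⟨hne, hdisj, hg⟩ := h
  have hinj : Set.InjOn (relabelFun S T) (ground L) := hg ▸ (relabelFun_strictMonoOn hc).injOn
  refine ⟨?_, ?_, by rw [ground_relabelSC, hg, image_relabelFun hc]⟩
  · simp only [_root_.relabelSC, List.mem_map]
    rintro _ ⟨B, hB, rfl⟩
    exact (hne B hB).image _
  · refine List.pairwise_map.2 (hdisj.imp_of_mem fun {B₁ B₂} hB₁ hB₂ hd => ?_)
    rw [← disjoint_coe, coe_image, coe_image]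
    exact (disjoint_coe.2 hd).image hinj (fun x hx => mem_ground.2 ⟨B₁, hB₁, hx⟩)
      (fun x hx => mem_ground.2 ⟨B₂, hB₂, hx⟩)

lemma append (h₁ : IsSetCompOf S L₁) (h₂ : IsSetCompOf T L₂) (hST : Disjoint S T) :
    IsSetCompOf (S ∪ T) (L₁ ++ L₂) := by
  obtain ⟨hne₁, hd₁, hg₁⟩ := h₁
  obtain ⟨hne₂, hd₂, hg₂⟩ := h₂
  refine ⟨fun B hB => (List.mem_append.1 hB).elim (hne₁ B) (hne₂ B), ?_,
    by rw [ground_append, hg₁, hg₂]⟩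
  refine List.pairwise_append.2 ⟨hd₁, hd₂, fun B₁ hB₁ B₂ hB₂ => ?_⟩
  exact hST.mono (hg₁ ▸ fun x hx => mem_ground.2 ⟨B₁, hB₁, hx⟩)
    (hg₂ ▸ fun x hx => mem_ground.2 ⟨B₂, hB₂, hx⟩)

end IsSetCompOf

/-- The summand of `P ∗̂ Q` indexed by `A ⊆ [p+q]`: `is_{[p],A}(P) ∗ is_{[q],[p+q] ∖ A}(Q)`. -/
def shuffle (p q : ℕ) (P Q : SC) (A : Finset ℕ) : SC :=
  relabelSC (Icc 1 p) A P ++ relabelSC (Icc 1 q) (Icc 1 (p + q) \ A) Q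

section Shuffle

variable {p q : ℕ} {P Q : SC} {A C : Finset ℕ}

lemma card_Icc_eq_card_of_mem_powersetCard {n : ℕ} (hA : A ∈ (Icc 1 n).powersetCard p) :
    (Icc 1 p).card = A.card := by
  simp [(mem_powersetCard.1 hA).2]

lemma card_Icc_eq_card_sdiff_of_mem_powersetCard (hA : A ∈ (Icc 1 (p + q)).powersetCard p) :
    (Icc 1 q).card = (Icc 1 (p + q) \ A).card := by
  obtain ⟨hAU, hAc⟩ := mem_powersetCard.1 hA
  rw [card_sdiff_of_subset hAU]
  simp [hAc]

lemma ground_shuffle (hP : ground P = Icc 1 p) (hQ : ground Q = Icc 1 q)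
    (hA : A ∈ (Icc 1 (p + q)).powersetCard p) : ground (shuffle p q P Q A) = Icc 1 (p + q) := by
  rw [shuffle, ground_append, ground_relabelSC, ground_relabelSC, hP, hQ,
    image_relabelFun (card_Icc_eq_card_of_mem_powersetCard hA),
    image_relabelFun (card_Icc_eq_card_sdiff_of_mem_powersetCard hA),
    union_sdiff_of_subset (mem_powersetCard.1 hA).1]

lemma isSetComp_shuffle (hP : IsSetComp p P) (hQ : IsSetComp q Q)
    (hA : A ∈ (Icc 1 (p + q)).powersetCard p) : IsSetComp (p + q) (shuffle p q P Q A) := by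
  have h := (IsSetCompOf.relabelSC hP (card_Icc_eq_card_of_mem_powersetCard hA)).append
    (IsSetCompOf.relabelSC hQ (card_Icc_eq_card_sdiff_of_mem_powersetCard hA)) disjoint_sdiff
  rwa [union_sdiff_of_subset (mem_powersetCard.1 hA).1] at h

lemma relabelSC_shuffle (hP : ground P = Icc 1 p) (hQ : ground Q = Icc 1 q)
    (hA : A ∈ (Icc 1 (p + q)).powersetCard p) (hC : C.card = p + q) :
    relabelSC (Icc 1 (p + q)) C (shuffle p q P Q A) =
      relabelSC (Icc 1 p) (A.image (relabelFun (Icc 1 (p + q)) C)) P ++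
        relabelSC (Icc 1 q) (C \ A.image (relabelFun (Icc 1 (p + q)) C)) Q := by
  have hc : (Icc 1 (p + q)).card = C.card := by simp [hC]
  have hAU := (mem_powersetCard.1 hA).1
  rw [shuffle, relabelSC_append,
    relabelSC_relabelSC (card_Icc_eq_card_of_mem_powersetCard hA) hc hAU hP.subset,
    relabelSC_relabelSC (card_Icc_eq_card_sdiff_of_mem_powersetCard hA) hc sdiff_subset hQ.subset,
    image_sdiff_of_injOn (relabelFun_strictMonoOn hc).injOn hAU, image_relabelFun hc]

end Shuffle

section Product

variable {R} {p q r : ℕ} {P Q R' : SC}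

lemma hatL_single_single (P Q : SC) :
    hatL R (Finsupp.single P 1) (Finsupp.single Q 1) = hatB R P Q := by
  simp [hatL]

lemma hatB_eq_sum_shuffle (hP : ground P = Icc 1 p) (hQ : ground Q = Icc 1 q) :
    hatB R P Q = ∑ A ∈ (Icc 1 (p + q)).powersetCard p, Finsupp.single (shuffle p q P Q A) 1 := by
  rw [hatB, maxG_eq hP, maxG_eq hQ, powersetCard_eq_filter]
  rfl

lemma hatL_hatB_single (hP : ground P = Icc 1 p) (hQ : ground Q = Icc 1 q)
    (hR : ground R' = Icc 1 r) :
    hatL R (hatB R P Q) (Finsupp.single R' 1) =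
      ∑ C ∈ (Icc 1 (p + q + r)).powersetCard (p + q), ∑ A ∈ C.powersetCard p,
        Finsupp.single (relabelSC (Icc 1 p) A P ++ relabelSC (Icc 1 q) (C \ A) Q ++
          relabelSC (Icc 1 r) (Icc 1 (p + q + r) \ C) R') 1 := by
  rw [hatB_eq_sum_shuffle hP hQ, map_sum, LinearMap.sum_apply]
  calc _ = ∑ A ∈ (Icc 1 (p + q)).powersetCard p, ∑ C ∈ (Icc 1 (p + q + r)).powersetCard (p + q),
        Finsupp.single (relabelSC (Icc 1 p) (A.image (relabelFun (Icc 1 (p + q)) C)) P ++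
          relabelSC (Icc 1 q) (C \ A.image (relabelFun (Icc 1 (p + q)) C)) Q ++
          relabelSC (Icc 1 r) (Icc 1 (p + q + r) \ C) R') (1 : R) := by
        refine sum_congr rfl fun A hA => ?_
        rw [hatL_single_single, hatB_eq_sum_shuffle (ground_shuffle hP hQ hA) hR]
        refine sum_congr rfl fun C hC => ?_
        rw [shuffle, relabelSC_shuffle hP hQ hA (mem_powersetCard.1 hC).2]
    _ = _ := sum_comm
    _ = _ := sum_congr rfl fun C hC =>
        sum_powersetCard_image_relabelFun (by simp [(mem_powersetCard.1 hC).2]) p fun A =>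
          Finsupp.single (relabelSC (Icc 1 p) A P ++ relabelSC (Icc 1 q) (C \ A) Q ++
            relabelSC (Icc 1 r) (Icc 1 (p + q + r) \ C) R') (1 : R)

lemma hatL_single_hatB (hP : ground P = Icc 1 p) (hQ : ground Q = Icc 1 q)
    (hR : ground R' = Icc 1 r) :
    hatL R (Finsupp.single P 1) (hatB R Q R') =
      ∑ A ∈ (Icc 1 (p + q + r)).powersetCard p, ∑ B ∈ (Icc 1 (p + q + r) \ A).powersetCard q,
        Finsupp.single (relabelSC (Icc 1 p) A P ++ (relabelSC (Icc 1 q) B Q ++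
          relabelSC (Icc 1 r) ((Icc 1 (p + q + r) \ A) \ B) R')) 1 := by
  have hcard : ∀ A ∈ (Icc 1 (p + q + r)).powersetCard p,
      (Icc 1 (q + r)).card = (Icc 1 (p + q + r) \ A).card := fun A hA => by
    rw [add_assoc] at hA ⊢
    exact card_Icc_eq_card_sdiff_of_mem_powersetCard hA
  rw [hatB_eq_sum_shuffle hQ hR, map_sum]
  calc _ = ∑ C ∈ (Icc 1 (q + r)).powersetCard q, ∑ A ∈ (Icc 1 (p + q + r)).powersetCard p,
        Finsupp.single (relabelSC (Icc 1 p) A P ++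
          (relabelSC (Icc 1 q) (C.image (relabelFun (Icc 1 (q + r)) (Icc 1 (p + q + r) \ A))) Q ++
          relabelSC (Icc 1 r) ((Icc 1 (p + q + r) \ A) \
            C.image (relabelFun (Icc 1 (q + r)) (Icc 1 (p + q + r) \ A))) R')) (1 : R) := by
        refine sum_congr rfl fun C hC => ?_
        rw [hatL_single_single, hatB_eq_sum_shuffle hP (ground_shuffle hQ hR hC), ← add_assoc]
        refine sum_congr rfl fun A hA => ?_
        rw [shuffle, ← add_assoc, relabelSC_shuffle hQ hR hC ((hcard A hA).symm.trans (by simp))]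
    _ = _ := sum_comm
    _ = _ := sum_congr rfl fun A hA =>
        sum_powersetCard_image_relabelFun (hcard A hA) q fun B =>
          Finsupp.single (relabelSC (Icc 1 p) A P ++ (relabelSC (Icc 1 q) B Q ++
            relabelSC (Icc 1 r) ((Icc 1 (p + q + r) \ A) \ B) R')) (1 : R)

lemma hatL_assoc_single (hP : ground P = Icc 1 p) (hQ : ground Q = Icc 1 q)
    (hR : ground R' = Icc 1 r) :
    hatL R (hatL R (Finsupp.single P 1) (Finsupp.single Q 1)) (Finsupp.single R' 1) =
      hatL R (Finsupp.single P 1) (hatL R (Finsupp.single Q 1) (Finsupp.single R' 1)) := by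
  rw [hatL_single_single, hatL_single_single, hatL_hatB_single hP hQ hR, hatL_single_hatB hP hQ hR]
  refine Eq.trans ?_ (sum_powersetCard_powersetCard _ p q _)
  refine sum_congr rfl fun C _ => sum_congr rfl fun A hA => ?_
  rw [List.append_assoc, sdiff_sdiff_left, sup_eq_union,
    union_sdiff_of_subset (mem_powersetCard.1 hA).1]

lemma hatB_nil_left (hQ : ground Q = Icc 1 q) : hatB R [] Q = Finsupp.single Q 1 := by
  rw [hatB_eq_sum_shuffle (p := 0) (by simp [ground]) hQ, powersetCard_zero, sum_singleton, shuffle,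
    zero_add, sdiff_empty, relabelSC_self hQ.subset]
  rfl

lemma hatB_nil_right (hP : ground P = Icc 1 p) : hatB R P [] = Finsupp.single P 1 := by
  have hself : (Icc 1 p).powersetCard p = {Icc 1 p} := by simpa using powersetCard_self (Icc 1 p)
  rw [hatB_eq_sum_shuffle (q := 0) hP (by simp [ground]), add_zero, hself, sum_singleton]
  rw [shuffle, relabelSC_self hP.subset]
  exact congrArg (Finsupp.single · 1) (List.append_nil P)

end Product

namespace LinearMap

variable {k M : Type*} [CommSemiring k] [AddCommMonoid M] [Module k M] {s : Set M}

lemma assoc_of_mem_span (μ : M →ₗ[k] M →ₗ[k] M)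
    (h : ∀ x ∈ s, ∀ y ∈ s, ∀ z ∈ s, μ (μ x y) z = μ x (μ y z)) :
    ∀ x ∈ Submodule.span k s, ∀ y ∈ Submodule.span k s, ∀ z ∈ Submodule.span k s,
      μ (μ x y) z = μ x (μ y z) := by
  have h₁ : ∀ x ∈ s, ∀ y ∈ s, ∀ z ∈ Submodule.span k s, μ (μ x y) z = μ x (μ y z) :=
    fun x hx y hy => eqOn_span (f := μ (μ x y)) (g := μ x ∘ₗ μ y) (h x hx y hy)
  have h₂ : ∀ x ∈ s, ∀ y ∈ Submodule.span k s, ∀ z ∈ Submodule.span k s,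
      μ (μ x y) z = μ x (μ y z) :=
    fun x hx y hy z hz => eqOn_span (f := μ.flip z ∘ₗ μ x) (g := μ x ∘ₗ μ.flip z)
      (fun y hy => h₁ x hx y hy z hz) hy
  exact fun x hx y hy z hz => eqOn_span (f := μ.flip z ∘ₗ μ.flip y) (g := μ.flip (μ y z))
    (fun x hx => h₂ x hx y hy z hz) hx

lemma unital_of_mem_span (μ : M →ₗ[k] M →ₗ[k] M) (e : M) (h : ∀ x ∈ s, μ e x = x ∧ μ x e = x) :
    ∀ x ∈ Submodule.span k s, μ e x = x ∧ μ x e = x :=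
  fun _ hx => ⟨eqOn_span (f := μ e) (g := id) (fun y hy => (h y hy).1) hx,
    eqOn_span (f := μ.flip e) (g := id) (fun y hy => (h y hy).2) hx⟩

end LinearMap

/-- **Theorem.** `(T_•, ∗̂)` is a graded associative unital algebra with unit the
empty set composition; in particular `(P ∗̂ Q) ∗̂ R = P ∗̂ (Q ∗̂ R)` for all set
compositions `P, Q, R`. -/
theorem symmetrized_product_algebra :
    (∀ (p q : ℕ) (P Q : SC), IsSetComp p P → IsSetComp q Q →
        hatL ℤ (Finsupp.single P 1) (Finsupp.single Q 1) ∈ Submodule.span ℤ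
          {f : FM ℤ | ∃ U : SC, IsSetComp (p + q) U ∧ f = Finsupp.single U 1}) ∧
    (∀ (p q r : ℕ) (P Q R' : SC), IsSetComp p P → IsSetComp q Q → IsSetComp r R' →
        hatL ℤ (hatL ℤ (Finsupp.single P 1) (Finsupp.single Q 1)) (Finsupp.single R' 1) =
          hatL ℤ (Finsupp.single P 1) (hatL ℤ (Finsupp.single Q 1) (Finsupp.single R' 1))) ∧
    (∀ x y z : FM ℤ, x ∈ Tspan ℤ → y ∈ Tspan ℤ → z ∈ Tspan ℤ →
        hatL ℤ (hatL ℤ x y) z = hatL ℤ x (hatL ℤ y z)) ∧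
    (∀ x : FM ℤ, x ∈ Tspan ℤ →
        hatL ℤ (Finsupp.single ([] : SC) 1) x = x ∧
        hatL ℤ x (Finsupp.single ([] : SC) 1) = x) := by
  refine ⟨fun p q P Q hP hQ => ?_,
    fun _ _ _ _ _ _ hP hQ hR => hatL_assoc_single hP.2.2 hQ.2.2 hR.2.2,
    fun x y z hx hy hz => ?_, ?_⟩
  · rw [hatL_single_single, hatB_eq_sum_shuffle hP.2.2 hQ.2.2]
    exact Submodule.sum_mem _ fun A hA => Submodule.subset_span ⟨_, isSetComp_shuffle hP hQ hA, rfl⟩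
  · refine LinearMap.assoc_of_mem_span _ ?_ x hx y hy z hz
    rintro _ ⟨p, P, hP, rfl⟩ _ ⟨q, Q, hQ, rfl⟩ _ ⟨r, R', hR, rfl⟩
    exact hatL_assoc_single hP.2.2 hQ.2.2 hR.2.2
  · refine LinearMap.unital_of_mem_span _ _ ?_
    rintro _ ⟨p, P, hP, rfl⟩
    rw [hatL_single_single, hatL_single_single, hatB_nil_left hP.2.2, hatB_nil_right hP.2.2]
    exact ⟨rfl, rfl⟩
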